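/- Let m, n ∈ ℂ and define on ℂ[x,y,z] the operators T₂₁ = ∂ₓ, T₃₁ = ∂_y, T₃₂ = ∂_z − x∂_y, T₁₂ = −x²∂ₓ − xy∂_y + xz∂_z + y∂_z + nx, T₂₃ = −z²∂_z − y∂ₓ + mz, T₁₃ = −y²∂_y − xy∂ₓ − z(y+xz)∂_z + (m+n)y + mxz, H₁ = 2x∂ₓ + y∂_y − z∂_z − n, H₂ = 2z∂_z + y∂_y − x∂ₓ − m, and T₁₁ = (2H₁+H₂)/3, T₂₂ = (H₂−H₁)/3, T₃₃ = −(H₁+2H₂)/3. Then these operators realize the Lie algebra sl(3): T₁₁ + T₂₂ + T₃₃ = 0 and [T_{ab}, T_{cd}] = δ_{cb} T_{ad} − δ_{ad} T_{cb} for all a,b,c,d ∈ {1,2,3}. -/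
import Mathlib


open MvPolynomial

/-- The endomorphism ring of `ℂ[x,y,z]` (variables `x = X 0`, `y = X 1`, `z = X 2`). -/
abbrev E3 : Type := Module.End ℂ (MvPolynomial (Fin 3) ℂ)

/-- Multiplication operators `x, y, z` on `ℂ[x,y,z]`. -/
noncomputable def Zm (i : Fin 3) : E3 := LinearMap.mulLeft ℂ (X i)

/-- Partial derivatives `∂ₓ, ∂_y, ∂_z` on `ℂ[x,y,z]`. -/
noncomputable def Dm (i : Fin 3) : E3 := (pderiv i).toLinearMap

/-- `H₁ = 2x∂ₓ + y∂_y − z∂_z − n`. -/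
noncomputable def H1 (n : ℂ) : E3 :=
  (2 : ℂ) • (Zm 0 * Dm 0) + Zm 1 * Dm 1 - Zm 2 * Dm 2 - n • 1

/-- `H₂ = 2z∂_z + y∂_y − x∂ₓ − m`. -/
noncomputable def H2 (m : ℂ) : E3 :=
  (2 : ℂ) • (Zm 2 * Dm 2) + Zm 1 * Dm 1 - Zm 0 * Dm 0 - m • 1

/-- The matrix of `sl(3)` generators `T_{ab}` (indices `0,1,2` for `1,2,3`):
`T₂₁ = ∂ₓ`, `T₃₁ = ∂_y`, `T₃₂ = ∂_z − x∂_y`,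
`T₁₂ = −x²∂ₓ − xy∂_y + xz∂_z + y∂_z + nx`, `T₂₃ = −z²∂_z − y∂ₓ + mz`,
`T₁₃ = −y²∂_y − xy∂ₓ − z(y+xz)∂_z + (m+n)y + mxz`,
`T₁₁ = (2H₁+H₂)/3`, `T₂₂ = (H₂−H₁)/3`, `T₃₃ = −(H₁+2H₂)/3`. -/
noncomputable def TM (m n : ℂ) : Matrix (Fin 3) (Fin 3) E3 :=
  !![((1 : ℂ)/3) • ((2 : ℂ) • H1 n + H2 m),
       -(Zm 0 * Zm 0 * Dm 0) - Zm 0 * Zm 1 * Dm 1 + Zm 0 * Zm 2 * Dm 2 + Zm 1 * Dm 2 + n • Zm 0,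
       -(Zm 1 * Zm 1 * Dm 1) - Zm 0 * Zm 1 * Dm 0 - Zm 2 * (Zm 1 + Zm 0 * Zm 2) * Dm 2
         + (m + n) • Zm 1 + m • (Zm 0 * Zm 2);
     Dm 0,
       ((1 : ℂ)/3) • (H2 m - H1 n),
       -(Zm 2 * Zm 2 * Dm 2) - Zm 1 * Dm 0 + m • Zm 2;
     Dm 1,
       Dm 2 - Zm 0 * Dm 1,
       (-(1 : ℂ)/3) • (H1 n + (2 : ℂ) • H2 m)]



lemma ZZ (i j : Fin 3) : Zm i * Zm j = Zm j * Zm i := by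
  apply LinearMap.ext; intro p
  simp [Zm, Module.End.mul_apply, LinearMap.mulLeft_apply, mul_left_comm]

lemma DD (i j : Fin 3) : Dm i * Dm j = Dm j * Dm i := by
  apply LinearMap.ext; intro p
  simp (config := { maxSteps := 3000000 }) only [Dm, Module.End.mul_apply, Derivation.coeFn_coe]
  induction p using MvPolynomial.induction_on with
  | C a => simp
  | add p q hp hq => simp [hp, hq]
  | mul_X p k hp => simp [pderiv_mul, hp, Pi.single_apply, apply_ite (pderiv i),
      apply_ite (pderiv j)]; ring

lemma DZ (i j : Fin 3) : Dm i * Zm j = Zm j * Dm i + (if i = j then 1 else 0) := by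
  apply LinearMap.ext; intro p
  by_cases h : i = j
  · subst h
    simp [Dm, Zm, Module.End.mul_apply, LinearMap.mulLeft_apply, pderiv_mul, mul_comm]
    ring
  · simp [Dm, Zm, Module.End.mul_apply, LinearMap.mulLeft_apply, pderiv_mul, h,
      pderiv_X_of_ne (Ne.symm h)]

lemma Z10 : Zm 1 * Zm 0 = Zm 0 * Zm 1 := ZZ 1 0
lemma Z10t (t : E3) : Zm 1 * (Zm 0 * t) = Zm 0 * (Zm 1 * t) := by rw [← mul_assoc, Z10, mul_assoc]
lemma D10 : Dm 1 * Dm 0 = Dm 0 * Dm 1 := DD 1 0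
lemma D10t (t : E3) : Dm 1 * (Dm 0 * t) = Dm 0 * (Dm 1 * t) := by rw [← mul_assoc, D10, mul_assoc]
lemma Z20 : Zm 2 * Zm 0 = Zm 0 * Zm 2 := ZZ 2 0
lemma Z20t (t : E3) : Zm 2 * (Zm 0 * t) = Zm 0 * (Zm 2 * t) := by rw [← mul_assoc, Z20, mul_assoc]
lemma D20 : Dm 2 * Dm 0 = Dm 0 * Dm 2 := DD 2 0
lemma D20t (t : E3) : Dm 2 * (Dm 0 * t) = Dm 0 * (Dm 2 * t) := by rw [← mul_assoc, D20, mul_assoc]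
lemma Z21 : Zm 2 * Zm 1 = Zm 1 * Zm 2 := ZZ 2 1
lemma Z21t (t : E3) : Zm 2 * (Zm 1 * t) = Zm 1 * (Zm 2 * t) := by rw [← mul_assoc, Z21, mul_assoc]
lemma D21 : Dm 2 * Dm 1 = Dm 1 * Dm 2 := DD 2 1
lemma D21t (t : E3) : Dm 2 * (Dm 1 * t) = Dm 1 * (Dm 2 * t) := by rw [← mul_assoc, D21, mul_assoc]
lemma DZ00 : Dm 0 * Zm 0 = Zm 0 * Dm 0 + 1 := by simpa using DZ 0 0
lemma DZ00t (t : E3) : Dm 0 * (Zm 0 * t) = Zm 0 * (Dm 0 * t) + t := by rw [← mul_assoc, DZ00, add_mul, one_mul, mul_assoc]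
lemma DZ01 : Dm 0 * Zm 1 = Zm 1 * Dm 0 := by simpa using DZ 0 1
lemma DZ01t (t : E3) : Dm 0 * (Zm 1 * t) = Zm 1 * (Dm 0 * t) := by rw [← mul_assoc, DZ01, mul_assoc]
lemma DZ02 : Dm 0 * Zm 2 = Zm 2 * Dm 0 := by simpa using DZ 0 2
lemma DZ02t (t : E3) : Dm 0 * (Zm 2 * t) = Zm 2 * (Dm 0 * t) := by rw [← mul_assoc, DZ02, mul_assoc]
lemma DZ10 : Dm 1 * Zm 0 = Zm 0 * Dm 1 := by simpa using DZ 1 0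
lemma DZ10t (t : E3) : Dm 1 * (Zm 0 * t) = Zm 0 * (Dm 1 * t) := by rw [← mul_assoc, DZ10, mul_assoc]
lemma DZ11 : Dm 1 * Zm 1 = Zm 1 * Dm 1 + 1 := by simpa using DZ 1 1
lemma DZ11t (t : E3) : Dm 1 * (Zm 1 * t) = Zm 1 * (Dm 1 * t) + t := by rw [← mul_assoc, DZ11, add_mul, one_mul, mul_assoc]
lemma DZ12 : Dm 1 * Zm 2 = Zm 2 * Dm 1 := by simpa using DZ 1 2
lemma DZ12t (t : E3) : Dm 1 * (Zm 2 * t) = Zm 2 * (Dm 1 * t) := by rw [← mul_assoc, DZ12, mul_assoc]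
lemma DZ20 : Dm 2 * Zm 0 = Zm 0 * Dm 2 := by simpa using DZ 2 0
lemma DZ20t (t : E3) : Dm 2 * (Zm 0 * t) = Zm 0 * (Dm 2 * t) := by rw [← mul_assoc, DZ20, mul_assoc]
lemma DZ21 : Dm 2 * Zm 1 = Zm 1 * Dm 2 := by simpa using DZ 2 1
lemma DZ21t (t : E3) : Dm 2 * (Zm 1 * t) = Zm 1 * (Dm 2 * t) := by rw [← mul_assoc, DZ21, mul_assoc]
lemma DZ22 : Dm 2 * Zm 2 = Zm 2 * Dm 2 + 1 := by simpa using DZ 2 2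
lemma DZ22t (t : E3) : Dm 2 * (Zm 2 * t) = Zm 2 * (Dm 2 * t) + t := by rw [← mul_assoc, DZ22, add_mul, one_mul, mul_assoc]




lemma mul_addE (a b c : E3) : a * (b + c) = a * b + a * c := mul_add a b c
lemma add_mulE (a b c : E3) : (a + b) * c = a * c + b * c := add_mul a b c
lemma mul_subE (a b c : E3) : a * (b - c) = a * b - a * c := mul_sub a b c
lemma sub_mulE (a b c : E3) : (a - b) * c = a * c - b * c := sub_mul a b c
lemma mul_negE (a b : E3) : a * -b = -(a * b) := mul_neg a b
lemma neg_mulE (a b : E3) : -a * b = -(a * b) := neg_mul a b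
lemma one_mulE (a : E3) : 1 * a = a := one_mul a
lemma mul_oneE (a : E3) : a * 1 = a := mul_one a
lemma mul_assocE (a b c : E3) : a * b * c = a * (b * c) := mul_assoc a b c
lemma smul_mulE (r : ℂ) (a b : E3) : (r • a) * b = r • (a * b) := smul_mul_assoc r a b
lemma mul_smulE (r : ℂ) (a b : E3) : a * (r • b) = r • (a * b) := mul_smul_comm r a b
lemma smul_addE (r : ℂ) (a b : E3) : r • (a + b) = r • a + r • b := smul_add r a b
lemma smul_subE (r : ℂ) (a b : E3) : r • (a - b) = r • a - r • b := smul_sub r a b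
lemma smul_negE (r : ℂ) (a : E3) : r • (-a) = -(r • a) := smul_neg r a
lemma smul_smulE (r s : ℂ) (a : E3) : r • (s • a) = (r * s) • a := smul_smul r s a
lemma one_smulE (a : E3) : (1 : ℂ) • a = a := one_smul ℂ a
lemma zero_smulE (a : E3) : (0 : ℂ) • a = 0 := zero_smul ℂ a
lemma neg_negE (a : E3) : -(-a) = a := neg_neg a
lemma f3_0 (h : 0 < 3) : (⟨0, h⟩ : Fin 3) = 0 := rfl
lemma f3_1 (h : 1 < 3) : (⟨1, h⟩ : Fin 3) = 1 := rfl
lemma f3_2 (h : 2 < 3) : (⟨2, h⟩ : Fin 3) = 2 := rfl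
lemma ite00 : (if (0:Fin 3) = 0 then (1:ℂ) else 0) = 1 := if_pos rfl
lemma ite01 : (if (0:Fin 3) = 1 then (1:ℂ) else 0) = 0 := if_neg (by decide)
lemma ite02 : (if (0:Fin 3) = 2 then (1:ℂ) else 0) = 0 := if_neg (by decide)
lemma ite10 : (if (1:Fin 3) = 0 then (1:ℂ) else 0) = 0 := if_neg (by decide)
lemma ite11 : (if (1:Fin 3) = 1 then (1:ℂ) else 0) = 1 := if_pos rfl
lemma ite12 : (if (1:Fin 3) = 2 then (1:ℂ) else 0) = 0 := if_neg (by decide)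
lemma ite20 : (if (2:Fin 3) = 0 then (1:ℂ) else 0) = 0 := if_neg (by decide)
lemma ite21 : (if (2:Fin 3) = 1 then (1:ℂ) else 0) = 0 := if_neg (by decide)
lemma ite22 : (if (2:Fin 3) = 2 then (1:ℂ) else 0) = 1 := if_pos rfl
lemma TM00 (m n : ℂ) : TM m n 0 0 = ((1 : ℂ)/3) • ((2 : ℂ) • H1 n + H2 m) := rfl
lemma TM01 (m n : ℂ) : TM m n 0 1 = -(Zm 0 * Zm 0 * Dm 0) - Zm 0 * Zm 1 * Dm 1 + Zm 0 * Zm 2 * Dm 2 + Zm 1 * Dm 2 + n • Zm 0 := rfl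
lemma TM02 (m n : ℂ) : TM m n 0 2 = -(Zm 1 * Zm 1 * Dm 1) - Zm 0 * Zm 1 * Dm 0 - Zm 2 * (Zm 1 + Zm 0 * Zm 2) * Dm 2 + (m + n) • Zm 1 + m • (Zm 0 * Zm 2) := rfl
lemma TM10 (m n : ℂ) : TM m n 1 0 = Dm 0 := rfl
lemma TM11 (m n : ℂ) : TM m n 1 1 = ((1 : ℂ)/3) • (H2 m - H1 n) := rfl
lemma TM12 (m n : ℂ) : TM m n 1 2 = -(Zm 2 * Zm 2 * Dm 2) - Zm 1 * Dm 0 + m • Zm 2 := rfl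
lemma TM20 (m n : ℂ) : TM m n 2 0 = Dm 1 := rfl
lemma TM21 (m n : ℂ) : TM m n 2 1 = Dm 2 - Zm 0 * Dm 1 := rfl
lemma TM22 (m n : ℂ) : TM m n 2 2 = (-(1 : ℂ)/3) • (H1 n + (2 : ℂ) • H2 m) := rfl

set_option maxHeartbeats 4000000 in
/-- The first-order differential operators `T_{ab}` on `ℂ[x,y,z]` realize the Lie
algebra `sl(3)`: `T₁₁ + T₂₂ + T₃₃ = 0` and
`[T_{ab}, T_{cd}] = δ_{cb} T_{ad} − δ_{ad} T_{cb}`. -/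
theorem sl3_realization (m n : ℂ) :
    TM m n 0 0 + TM m n 1 1 + TM m n 2 2 = 0 ∧
    ∀ a b c d : Fin 3,
      TM m n a b * TM m n c d - TM m n c d * TM m n a b
        = (if c = b then (1 : ℂ) else 0) • TM m n a d
            - (if a = d then (1 : ℂ) else 0) • TM m n c b := by
  constructor
  · simp only [TM00, TM11, TM22, H1, H2, smul_addE, smul_subE, smul_negE, smul_smulE,
      neg_negE, one_smulE]
    module
  · intro a b c d
    fin_cases a <;> fin_cases b <;> fin_cases c <;> fin_cases d <;>
      · simp (config := { maxSteps := 3000000 }) only [f3_0, f3_1, f3_2, ite00, ite01, ite02, ite10, ite11, ite12, ite20, ite21, ite22, TM00, TM01, TM02, TM10, TM11, TM12, TM20, TM21, TM22, H1, H2, mul_addE, add_mulE, mul_subE, sub_mulE, mul_negE, neg_mulE, one_mulE, mul_oneE, mul_assocE, smul_mulE, mul_smulE, smul_addE, smul_subE, smul_negE, smul_smulE, one_smulE, zero_smulE, neg_negE, Z10, Z20, Z21, Z10t, Z20t, Z21t, D10, D20, D21, D10t, D20t, D21t, DZ00, DZ01, DZ02, DZ10, DZ11, DZ12, DZ20, DZ21,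 DZ22, DZ00t, DZ01t, DZ02t, DZ10t, DZ11t, DZ12t, DZ20t, DZ21t, DZ22t]
        match_scalars <;> (try simp) <;> (try ring_nf)
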